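/- arXiv:2308.10812 — 5 statements merged into one kernel-verified Lean document; each statement's English description precedes it below -/
import Mathlib

section
/- Let A be an infinite totally ordered set. For every n ≥ 1 and every sequence d₁,...,d_{n−1} ∈ ℕ₀ ∪ {∞}, there exists a nondecreasing tuple a₁ ≤ ... ≤ aₙ in the lexicographic product A × ℤ with dist(aᵢ, aᵢ₊₁) = dᵢ for all 1 ≤ i ≤ n−1. -/
/-- The distance in a linear order: `0` if the points are equal, otherwise the
number of strictly intermediate points plus one, as an element of `ℕ∞`. -/
noncomputable def odist {α : Type*} [LinearOrder α] (x y : α) : ℕ∞ :=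
  if x = y then 0 else (Set.Ioo (min x y) (max x y)).encard + 1

/-!
The fibre `{x} × ℤ` is an order-convex copy of `ℤ` inside `A ×ₗ ℤ`, so any finite distance is
realised by moving up inside one fibre, while two points in different fibres have a whole
ray of a fibre between them and are at distance `∞`. Fix a chain `u₀ < ⋯ < uₙ` in `A` and add
the points one at a time, jumping to the fibre over `uᵢ₊₁` whenever `dᵢ = ∞`: the first
coordinate of the `i`-th point stays `≤ uᵢ`, so a fresh fibre above it is always available.
-/

open Set

theorem odist_map_of_ordConnected {α β : Type*} [LinearOrder α] [LinearOrder β] (e : α ↪o β)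
    (he : (range e).OrdConnected) (x y : α) : odist (e x) (e y) = odist x y := by
  simp only [odist, e.injective.eq_iff, ← e.monotone.map_min, ← e.monotone.map_max,
    ← e.image_Ioo he, e.injective.encard_image]

theorem Int.odist_add_natCast (m : ℤ) (k : ℕ) : odist m (m + k) = k := by
  rcases k.eq_zero_or_pos with rfl | hk
  · simp [odist]
  have hle : m ≤ m + k := by omega
  rw [odist, if_neg (by omega), min_eq_left hle, max_eq_right hle, ← Finset.coe_Ioo,
    encard_coe_eq_coe_finsetCard, Int.card_Ioo]
  norm_cast
  omega

namespace Prod.Lex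

variable {α β : Type*}

def toLexFiber [PartialOrder α] [PartialOrder β] (a : α) : β ↪o α ×ₗ β :=
  OrderEmbedding.ofMapLEIff (fun b : β => toLex (a, b)) fun b b' => by simp [toLex_le_toLex]

theorem ordConnected_range_toLexFiber [PartialOrder α] [PartialOrder β] (a : α) :
    (range (toLexFiber a : β ↪o α ×ₗ β)).OrdConnected := by
  refine ⟨?_⟩
  rintro _ ⟨b, rfl⟩ _ ⟨b', rfl⟩ p ⟨h₁, h₂⟩
  have hp : (ofLex p).1 = a := le_antisymm (monotone_fst_ofLex h₂ :) (monotone_fst_ofLex h₁ :)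
  exact ⟨(ofLex p).2, by simp [toLexFiber, ← hp]⟩

variable [LinearOrder α] [LinearOrder β]

theorem odist_toLex_toLex_of_fst_eq (a : α) (b b' : β) :
    odist (toLex (a, b) : α ×ₗ β) (toLex (a, b')) = odist b b' :=
  odist_map_of_ordConnected _ (ordConnected_range_toLexFiber a) b b'

theorem odist_eq_top_of_fst_lt [NoMaxOrder β] {p q : α ×ₗ β} (h : (ofLex p).1 < (ofLex q).1) :
    odist p q = ⊤ := by
  have hpq : p < q := lt_iff.2 (Or.inl h)
  suffices (Ioo p q).Infinite by
    rw [odist, if_neg hpq.ne, min_eq_left hpq.le, max_eq_right hpq.le, this.encard_eq, top_add]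
  refine ((Ioi_infinite (ofLex p).2).image (toLexFiber (ofLex p).1).injective.injOn).mono ?_
  rintro _ ⟨b, hb, rfl⟩
  exact ⟨lt_iff.2 (Or.inr ⟨rfl, hb⟩), lt_iff.2 (Or.inl h)⟩

end Prod.Lex

section Realization

variable {A : Type*} [LinearOrder A]

theorem exists_le_odist_eq (p : A ×ₗ ℤ) {y : A} (hy : (ofLex p).1 < y) (δ : ℕ∞) :
    ∃ q, p ≤ q ∧ odist p q = δ ∧ (ofLex q).1 ≤ y := by
  induction δ with
  | top =>
    exact ⟨toLex (y, 0), Prod.Lex.le_iff.2 (Or.inl hy), Prod.Lex.odist_eq_top_of_fst_lt hy,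
      le_rfl⟩
  | coe k =>
    refine ⟨toLex ((ofLex p).1, (ofLex p).2 + k), Prod.Lex.le_iff.2 (Or.inr ⟨rfl, by simp⟩),
      ?_, hy.le⟩
    simpa only [Int.odist_add_natCast, Prod.mk.eta, toLex_ofLex] using
      Prod.Lex.odist_toLex_toLex_of_fst_eq (ofLex p).1 (ofLex p).2 ((ofLex p).2 + k)

theorem exists_monotone_tuple_of_strictMono {n : ℕ} {u : Fin (n + 1) → A} (hu : StrictMono u)
    (d : Fin n → ℕ∞) :
    ∃ a : Fin (n + 1) → A ×ₗ ℤ, Monotone a ∧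
      (∀ i : Fin n, odist (a i.castSucc) (a i.succ) = d i) ∧
      (ofLex (a (Fin.last n))).1 ≤ u (Fin.last n) := by
  induction n with
  | zero => exact ⟨fun _ => toLex (u 0, 0), fun _ _ _ => le_rfl, fun i => i.elim0, le_rfl⟩
  | succ n ih =>
    obtain ⟨a, ha_mono, ha_dist, ha_last⟩ := ih (hu.comp Fin.strictMono_castSucc) (Fin.init d)
    obtain ⟨q, hq_le, hq_dist, hq_last⟩ := exists_le_odist_eq (a (Fin.last n))
      (ha_last.trans_lt (hu (Fin.castSucc_lt_last _))) (d (Fin.last n))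
    refine ⟨Fin.snoc a q, ?_, fun i => ?_, by rwa [Fin.snoc_last]⟩
    · simpa only [Fin.insertNth_last'] using Fin.insertNth_last_monotone ha_mono q hq_le
    · induction i using Fin.lastCases with
      | last =>
        rw [Fin.snoc_castSucc, Fin.succ_last, Fin.snoc_last]
        exact hq_dist
      | cast j =>
        rw [Fin.succ_castSucc, Fin.snoc_castSucc, Fin.snoc_castSucc]
        exact ha_dist j

end Realization

/-- In the lexicographic product of an infinite linear order `A` with `ℤ`, every
prescribed finite-or-infinite sequence of consecutive distances is realized by
some nondecreasing tuple. -/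
theorem exists_monotone_tuple_with_prescribed_dists
    (A : Type*) [LinearOrder A] [Infinite A]
    (n : ℕ) (d : Fin n → ℕ∞) :
    ∃ a : Fin (n + 1) → A ×ₗ ℤ, Monotone a ∧
      ∀ i : Fin n, odist (a i.castSucc) (a i.succ) = d i := by
  obtain ⟨s, hs⟩ := Infinite.exists_subset_card_eq A (n + 1)
  obtain ⟨a, ha_mono, ha_dist, -⟩ :=
    exists_monotone_tuple_of_strictMono (s.orderEmbOfFin hs).strictMono d
  exact ⟨a, ha_mono, ha_dist⟩
end

section
/- If A and B are infinite totally ordered sets, then the lexicographic products A × ℤ and B × ℤ are isotypic as ordered sets. -/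
/-!
An Ehrenfeucht–Fraïssé argument. Write `x + k` for the shift of `x` by `k` inside its `ℤ`-block,
and call two tuples `N`-equivalent when `aᵢ + k ≤ aⱼ ↔ bᵢ + k ≤ bⱼ` for all `|k| < N`, i.e. when
their signed distances agree after truncation at `N`. A `(2N+1)`-equivalence extends by one point
to an `N`-equivalence: a point at distance `< N` from some `aᵢ` is copied at the same offset from
`bᵢ`, and a point far from every `aᵢ` is put `N` above the largest `bᵢ` below it, the truncation at
`2N+1` leaving enough room above. Hence every formula is invariant under `N`-equivalence for some
`N`. Embedding the finitely many blocks met by a tuple of `A ×ₗ ℤ` into the infinite order `B`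
gives a tuple of `B ×ₗ ℤ` that is `N`-equivalent to it for every `N`.
-/

open FirstOrder Language

attribute [local instance] FirstOrder.Language.orderStructure

/-- Two structures are isotypic if every finite tuple in one of them has a
counterpart in the other realizing exactly the same first-order formulas,
and vice versa. -/
def Isotypic (L : FirstOrder.Language) (M N : Type*) [L.Structure M] [L.Structure N] : Prop :=
  (∀ (n : ℕ) (a : Fin n → M), ∃ b : Fin n → N,
      ∀ φ : L.Formula (Fin n), φ.Realize a ↔ φ.Realize b) ∧
  (∀ (n : ℕ) (b : Fin n → N), ∃ a : Fin n → M,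
      ∀ φ : L.Formula (Fin n), φ.Realize a ↔ φ.Realize b)

namespace LexProdInt

section Shift

variable {A : Type*}

def shift (k : ℤ) (x : A ×ₗ ℤ) : A ×ₗ ℤ :=
  toLex ((ofLex x).1, (ofLex x).2 + k)

@[simp]
lemma shift_zero (x : A ×ₗ ℤ) : shift 0 x = x := by
  simp [shift]

@[simp]
lemma shift_shift (k l : ℤ) (x : A ×ₗ ℤ) : shift k (shift l x) = shift (l + k) x := by
  simp [shift, add_assoc]

variable [LinearOrder A]

lemma shift_le_shift_iff {k l : ℤ} {x y : A ×ₗ ℤ} :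
    shift k x ≤ shift l y ↔ shift (k - l) x ≤ y := by
  have hk : (ofLex x).2 + k ≤ (ofLex y).2 + l ↔ (ofLex x).2 + (k - l) ≤ (ofLex y).2 := by omega
  simp only [shift, Prod.Lex.le_iff, ofLex_toLex, hk]

lemma shift_le_shift {x y : A ×ₗ ℤ} (h : x ≤ y) (k : ℤ) : shift k x ≤ shift k y := by
  simpa [shift_le_shift_iff] using h

lemma shift_le_self_iff {k : ℤ} {x : A ×ₗ ℤ} : shift k x ≤ x ↔ k ≤ 0 := by
  simp [shift, Prod.Lex.le_iff]

lemma shift_le_or_shift_le {N : ℤ} {x y : A ×ₗ ℤ} (h : ∀ e, |e| < N → y ≠ shift e x) :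
    shift N x ≤ y ∨ shift N y ≤ x := by
  simp only [shift, Prod.Lex.le_iff, ofLex_toLex]
  rcases lt_trichotomy (ofLex x).1 (ofLex y).1 with hxy | hxy | hxy
  · exact .inl (.inl hxy)
  · have hfar : ¬ |(ofLex y).2 - (ofLex x).2| < N := fun he =>
      h _ he (by rw [shift, hxy]; simp)
    simp only [hxy, lt_irrefl, true_and, false_or]
    rw [abs_lt] at hfar
    omega
  · exact .inr (.inl hxy)

lemma shift_le_and_not_le {N k : ℤ} {x y : A ×ₗ ℤ} (h : shift N x ≤ y) (hk : |k| < N) :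
    shift k x ≤ y ∧ ¬ shift k y ≤ x := by
  rw [abs_lt] at hk
  refine ⟨le_trans ?_ h, fun hyx => ?_⟩
  · rw [shift_le_shift_iff, shift_le_self_iff]
    omega
  · have : shift (k + N) y ≤ y := by simpa using (shift_le_shift hyx N).trans h
    rw [shift_le_self_iff] at this
    omega

end Shift

variable {A B C : Type*} [LinearOrder A] [LinearOrder B] [LinearOrder C]

noncomputable def lexMap (f : A ↪o B) : A ×ₗ ℤ ↪o B ×ₗ ℤ :=
  OrderEmbedding.ofMapLEIff (fun x => toLex (f (ofLex x).1, (ofLex x).2))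
    (by simp [Prod.Lex.le_iff])

lemma lexMap_shift (f : A ↪o B) (k : ℤ) (x : A ×ₗ ℤ) :
    lexMap f (shift k x) = shift k (lexMap f x) :=
  rfl

-- Points in different blocks are infinitely far apart.
def DistAgree (N : ℕ) (x y : A ×ₗ ℤ) (x' y' : B ×ₗ ℤ) : Prop :=
  ∀ k : ℤ, |k| < N → (shift k x ≤ y ↔ shift k x' ≤ y')

namespace DistAgree

variable {N : ℕ} {x y : A ×ₗ ℤ} {x' y' : B ×ₗ ℤ} {x'' y'' : C ×ₗ ℤ}

lemma symm (h : DistAgree N x y x' y') : DistAgree N x' y' x y :=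
  fun k hk => (h k hk).symm

lemma trans (h : DistAgree N x y x' y') (h' : DistAgree N x' y' x'' y'') :
    DistAgree N x y x'' y'' :=
  fun k hk => (h k hk).trans (h' k hk)

lemma mono {M : ℕ} (h : DistAgree M x y x' y') (hNM : N ≤ M) : DistAgree N x y x' y' :=
  fun k hk => h k (hk.trans_le (by exact_mod_cast hNM))

end DistAgree

lemma distAgree_self (N : ℕ) (x : A ×ₗ ℤ) (x' : B ×ₗ ℤ) : DistAgree N x x x' x' :=
  fun _ _ => by rw [shift_le_self_iff, shift_le_self_iff]

lemma distAgree_of_shift_le {N : ℕ} {x y : A ×ₗ ℤ} {x' y' : B ×ₗ ℤ}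
    (h : shift N x ≤ y) (h' : shift N x' ≤ y') :
    DistAgree N x y x' y' ∧ DistAgree N y x y' x' :=
  ⟨fun _ hk => iff_of_true (shift_le_and_not_le h hk).1 (shift_le_and_not_le h' hk).1,
    fun _ hk => iff_of_false (shift_le_and_not_le h hk).2 (shift_le_and_not_le h' hk).2⟩

def DistEquiv {ι : Type*} (N : ℕ) (a : ι → A ×ₗ ℤ) (b : ι → B ×ₗ ℤ) : Prop :=
  ∀ i j, DistAgree N (a i) (a j) (b i) (b j)

namespace DistEquiv

variable {ι κ : Type*} {N : ℕ} {a : ι → A ×ₗ ℤ} {b : ι → B ×ₗ ℤ}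

lemma symm (h : DistEquiv N a b) : DistEquiv N b a :=
  fun i j => (h i j).symm

lemma trans {c : ι → C ×ₗ ℤ} (h : DistEquiv N a b) (h' : DistEquiv N b c) : DistEquiv N a c :=
  fun i j => (h i j).trans (h' i j)

lemma mono {M : ℕ} (h : DistEquiv M a b) (hNM : N ≤ M) : DistEquiv N a b :=
  fun i j => (h i j).mono hNM

lemma comp (h : DistEquiv N a b) (g : κ → ι) : DistEquiv N (a ∘ g) (b ∘ g) :=
  fun i j => h (g i) (g j)

lemma le_iff (h : DistEquiv N a b) (hN : 0 < N) (i j : ι) : a i ≤ a j ↔ b i ≤ b j := by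
  simpa using h i j 0 (by simpa)

lemma option_elim {c : A ×ₗ ℤ} {d : B ×ₗ ℤ} (h : DistEquiv N a b)
    (hcd : ∀ j, DistAgree N c (a j) d (b j) ∧ DistAgree N (a j) c (b j) d) :
    DistEquiv N (fun o : Option ι => o.elim c a) (fun o : Option ι => o.elim d b)
  | none, none => distAgree_self N c d
  | none, some j => (hcd j).1
  | some i, none => (hcd i).2
  | some i, some j => h i j

lemma distAgree_shift (h : DistEquiv (2 * N + 1) a b) {e : ℤ} (he : |e| < N) (i j : ι) :
    DistAgree N (shift e (a i)) (a j) (shift e (b i)) (b j) ∧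
      DistAgree N (a j) (shift e (a i)) (b j) (shift e (b i)) := by
  rw [abs_lt] at he
  constructor <;> intro k hk <;> rw [abs_lt] at hk
  · simpa only [shift_shift] using h i j (e + k) (by push_cast; rw [abs_lt]; omega)
  · simpa only [shift_le_shift_iff, shift_zero] using
      h j i (k - e) (by push_cast; rw [abs_lt]; omega)

end DistEquiv

lemma distEquiv_lexMap_comp {ι : Type*} (f : A ↪o B) (a : ι → A ×ₗ ℤ) (N : ℕ) :
    DistEquiv N a (lexMap f ∘ a) :=
  fun i j k _ => by simp only [Function.comp_apply, ← lexMap_shift, OrderEmbedding.le_iff_le]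

lemma exists_forall_distEquiv {ι : Type*} [Finite ι] [Infinite B] (a : ι → A ×ₗ ℤ) :
    ∃ b : ι → B ×ₗ ℤ, ∀ N, DistEquiv N a b := by
  let s := Set.range fun i => (ofLex (a i)).1
  obtain ⟨f⟩ := nonempty_orderEmbedding_of_finite_infinite s B
  let a' : ι → s ×ₗ ℤ := fun i => toLex (⟨(ofLex (a i)).1, i, rfl⟩, (ofLex (a i)).2)
  have ha : lexMap (OrderEmbedding.subtype _) ∘ a' = a := rfl
  refine ⟨lexMap f ∘ a', fun N => ?_⟩
  rw [← ha]
  exact (distEquiv_lexMap_comp _ a' N).symm.trans (distEquiv_lexMap_comp f a' N)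

lemma exists_shift_le_between {ι : Type*} [Finite ι] [Nonempty B] (b : ι → B ×ₗ ℤ) (S : Set ι)
    (N : ℤ) (hgap : ∀ i ∈ S, ∀ j ∉ S, shift (2 * N) (b i) ≤ b j) :
    ∃ d, (∀ i ∈ S, shift N (b i) ≤ d) ∧ ∀ j ∉ S, shift N d ≤ b j := by
  by_cases hS : S.Nonempty
  · have := hS.to_subtype
    obtain ⟨⟨i₀, hi₀⟩, hmax⟩ := Finite.exists_max fun i : S => b i
    refine ⟨shift N (b i₀), fun i hi => shift_le_shift (hmax ⟨i, hi⟩) N, fun j hj => ?_⟩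
    simpa [two_mul] using hgap i₀ hi₀ j hj
  · rw [Set.not_nonempty_iff_eq_empty] at hS
    subst hS
    obtain hι | hι := isEmpty_or_nonempty ι
    · exact ⟨toLex (Classical.arbitrary B, 0), by simp, fun j => isEmptyElim j⟩
    · obtain ⟨j₀, hmin⟩ := Finite.exists_min b
      exact ⟨shift (-N) (b j₀), by simp, fun j _ => by simpa using hmin j⟩

lemma DistEquiv.exists_extend {ι : Type*} [Finite ι] [Nonempty B] {N : ℕ} {a : ι → A ×ₗ ℤ}
    {b : ι → B ×ₗ ℤ} (h : DistEquiv (2 * N + 1) a b) (c : A ×ₗ ℤ) :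
    ∃ d, DistEquiv N (fun o : Option ι => o.elim c a) (fun o : Option ι => o.elim d b) := by
  suffices ∃ d, ∀ j, DistAgree N c (a j) d (b j) ∧ DistAgree N (a j) c (b j) d from
    this.imp fun d hd => (h.mono (by omega)).option_elim hd
  by_cases hclose : ∃ i, ∃ e : ℤ, |e| < N ∧ c = shift e (a i)
  · obtain ⟨i, e, he, rfl⟩ := hclose
    exact ⟨shift e (b i), h.distAgree_shift he i⟩
  push Not at hclose
  have hfar j : shift N (a j) ≤ c ∨ shift N c ≤ a j := shift_le_or_shift_le (hclose j)
  obtain ⟨d, hbelow, habove⟩ := exists_shift_le_between b {j | shift N (a j) ≤ c} N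
    fun i hi j hj => by
      have hij : shift (2 * N : ℕ) (a i) ≤ a j := by
        simpa [two_mul] using
          (shift_le_shift hi N).trans ((hfar j).resolve_left hj)
      simpa using (h i j _ (by simp [abs_of_nonneg])).1 hij
  refine ⟨d, fun j => ?_⟩
  by_cases hj : shift N (a j) ≤ c
  · exact (distAgree_of_shift_le hj (hbelow j hj)).symm
  · exact distAgree_of_shift_le ((hfar j).resolve_left hj) (habove j hj)

def snocIndex {α : Type*} {m : ℕ} : α ⊕ Fin (m + 1) → Option (α ⊕ Fin m) :=
  Sum.elim (some ∘ Sum.inl) (Option.map Sum.inr ∘ finSuccEquivLast)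

lemma sum_elim_snoc_eq_comp {α M : Type*} {m : ℕ} (v : α → M) (xs : Fin m → M) (x : M) :
    Sum.elim v (Fin.snoc xs x) = (fun o => o.elim x (Sum.elim v xs)) ∘ snocIndex := by
  funext i
  rcases i with i | i
  · rfl
  · induction i using Fin.lastCases <;> simp [snocIndex]

lemma DistEquiv.exists_extend_snoc {α : Type*} [Finite α] [Nonempty B] {N m : ℕ}
    {v : α → A ×ₗ ℤ} {xs : Fin m → A ×ₗ ℤ} {w : α → B ×ₗ ℤ} {ys : Fin m → B ×ₗ ℤ}
    (h : DistEquiv (2 * N + 1) (Sum.elim v xs) (Sum.elim w ys)) (x : A ×ₗ ℤ) :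
    ∃ y, DistEquiv N (Sum.elim v (Fin.snoc xs x)) (Sum.elim w (Fin.snoc ys y)) := by
  obtain ⟨y, hy⟩ := h.exists_extend x
  exact ⟨y, by simpa only [sum_elim_snoc_eq_comp] using hy.comp snocIndex⟩

lemma DistEquiv.realize_le_iff {ι : Type*} {N : ℕ} {a : ι → A ×ₗ ℤ} {b : ι → B ×ₗ ℤ}
    (h : DistEquiv N a b) (hN : 0 < N) :
    ∀ t₁ t₂ : Language.order.Term ι, t₁.realize a ≤ t₂.realize a ↔ t₁.realize b ≤ t₂.realize b
  | .var i, .var j => h.le_iff hN i j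
  | .func f _, _ | _, .func f _ => isEmptyElim f

lemma exists_distEquiv_realize_iff {α : Type*} [Finite α] [Nonempty A] [Nonempty B] {m : ℕ}
    (φ : Language.order.BoundedFormula α m) :
    ∃ N, ∀ (v : α → A ×ₗ ℤ) (xs : Fin m → A ×ₗ ℤ) (w : α → B ×ₗ ℤ) (ys : Fin m → B ×ₗ ℤ),
      DistEquiv N (Sum.elim v xs) (Sum.elim w ys) → (φ.Realize v xs ↔ φ.Realize w ys) := by
  induction φ with
  | falsum => exact ⟨0, fun _ _ _ _ _ => Iff.rfl⟩
  | equal t₁ t₂ =>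
    refine ⟨1, fun v xs w ys h => ?_⟩
    simp only [BoundedFormula.Realize, le_antisymm_iff, h.realize_le_iff one_pos]
  | rel R ts =>
    cases R
    exact ⟨1, fun v xs w ys h => h.realize_le_iff one_pos (ts 0) (ts 1)⟩
  | imp φ ψ ihφ ihψ =>
    obtain ⟨N₁, h₁⟩ := ihφ
    obtain ⟨N₂, h₂⟩ := ihψ
    refine ⟨max N₁ N₂, fun v xs w ys h => ?_⟩
    simp only [BoundedFormula.realize_imp, h₁ v xs w ys (h.mono (le_max_left _ _)),
      h₂ v xs w ys (h.mono (le_max_right _ _))]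
  | all φ ih =>
    obtain ⟨N, hN⟩ := ih
    refine ⟨2 * N + 1, fun v xs w ys h => ?_⟩
    simp only [BoundedFormula.realize_all]
    constructor
    · intro hφ y
      obtain ⟨x, hx⟩ := h.symm.exists_extend_snoc y
      exact (hN _ _ _ _ hx.symm).1 (hφ x)
    · intro hφ x
      obtain ⟨y, hy⟩ := h.exists_extend_snoc x
      exact (hN _ _ _ _ hy).2 (hφ y)

lemma exists_formula_realize_iff {α : Type*} [Finite α] [Nonempty A] [Infinite B]
    (a : α → A ×ₗ ℤ) :
    ∃ b : α → B ×ₗ ℤ, ∀ φ : Language.order.Formula α, φ.Realize a ↔ φ.Realize b := by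
  obtain ⟨b, hb⟩ := exists_forall_distEquiv (B := B) a
  refine ⟨b, fun φ => ?_⟩
  obtain ⟨N, hN⟩ := exists_distEquiv_realize_iff (A := A) (B := B) φ
  refine hN a default b default fun i j => ?_
  rcases i with i | i
  · rcases j with j | j
    exacts [hb N i j, j.elim0]
  · exact i.elim0

end LexProdInt

/-- If `A` and `B` are infinite linear orders, the lexicographic products
`A ×ₗ ℤ` and `B ×ₗ ℤ` are isotypic as ordered sets. -/
theorem isotypic_lex_prod_int
    (A B : Type*) [LinearOrder A] [LinearOrder B] [Infinite A] [Infinite B] :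
    Isotypic Language.order (A ×ₗ ℤ) (B ×ₗ ℤ) := by
  refine ⟨fun _ a => LexProdInt.exists_formula_realize_iff (B := B) a, fun _ b => ?_⟩
  obtain ⟨a, ha⟩ := LexProdInt.exists_formula_realize_iff (B := A) b
  exact ⟨a, fun φ => (ha φ).symm⟩
end

section
/- If A and B are totally ordered sets and the lexicographic products A × ℤ and B × ℤ are order-isomorphic, then A and B are order-isomorphic. -/
/-!
In `α ×ₗ β`, with `β` locally finite and without a maximum (such as `ℤ`), the closed interval
between two points is finite exactly when they have the same first coordinate. Finiteness of
intervals is invariant under order isomorphisms, so an isomorphism `α ×ₗ β ≃o γ ×ₗ β` maps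
fibres of the first projection onto fibres; the induced map `α → γ` is monotone, injective and
surjective, hence an order isomorphism.
-/

open Set

theorem OrderIso.image_uIcc {α β : Type*} [Lattice α] [Lattice β] (e : α ≃o β) (a b : α) :
    e '' uIcc a b = uIcc (e a) (e b) := by
  rw [uIcc, e.image_Icc, map_inf, map_sup, uIcc]

namespace Prod.Lex

variable {α β γ : Type*} [LinearOrder α] [LinearOrder β] [LinearOrder γ]

theorem uIcc_finite_iff [LocallyFiniteOrder β] [NoMaxOrder β] {x y : α ×ₗ β} :
    (uIcc x y).Finite ↔ (ofLex x).1 = (ofLex y).1 := by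
  wlog hxy : x ≤ y generalizing x y
  · rw [uIcc_comm, eq_comm]
    exact this (le_of_not_ge hxy)
  rw [uIcc_of_le hxy]
  obtain ⟨a, m⟩ := x
  obtain ⟨a', m'⟩ := y
  have hinj : Function.Injective fun k : β => toLex (a, k) :=
    toLex.injective.comp (Prod.mk_right_injective a)
  constructor
  · intro hfin
    by_contra hne
    have hlt : a < a' := (monotone_fst _ _ hxy).lt_of_ne hne
    refine Ici_infinite m ((hfin.preimage hinj.injOn).subset fun k hk => ?_)
    exact ⟨toLex_le_toLex.2 (.inr ⟨rfl, hk⟩), toLex_le_toLex.2 (.inl hlt)⟩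
  · rintro (rfl : a = a')
    refine ((finite_Icc m m').image fun k => toLex (a, k)).subset ?_
    rintro ⟨c, k⟩ ⟨hl, hr⟩
    obtain rfl : c = a := le_antisymm (monotone_fst _ _ hr) (monotone_fst _ _ hl)
    exact ⟨k, ⟨(toLex_le_toLex'.1 hl).2 rfl, (toLex_le_toLex'.1 hr).2 rfl⟩, rfl⟩

variable [LocallyFiniteOrder β] [NoMaxOrder β]

theorem fst_ofLex_orderIso_apply_eq_iff (e : α ×ₗ β ≃o γ ×ₗ β) {x y : α ×ₗ β} :
    (ofLex (e x)).1 = (ofLex (e y)).1 ↔ (ofLex x).1 = (ofLex y).1 := by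
  rw [← uIcc_finite_iff, ← uIcc_finite_iff, ← e.image_uIcc, finite_image_iff e.injective.injOn]

def fstMapOfOrderIso (e : α ×ₗ β ≃o γ ×ₗ β) (b : β) (a : α) : γ :=
  (ofLex (e (toLex (a, b)))).1

theorem strictMono_fstMapOfOrderIso (e : α ×ₗ β ≃o γ ×ₗ β) (b : β) :
    StrictMono (fstMapOfOrderIso e b) := by
  have hmono : Monotone (fstMapOfOrderIso e b) :=
    monotone_fst_ofLex.comp (e.monotone.comp fun _ _ h => toLex_mono ⟨h, le_rfl⟩)
  exact hmono.strictMono_of_injective fun a a' h => by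
    simpa using (fst_ofLex_orderIso_apply_eq_iff e).1 h

theorem surjective_fstMapOfOrderIso (e : α ×ₗ β ≃o γ ×ₗ β) (b : β) :
    Function.Surjective (fstMapOfOrderIso e b) := by
  intro c
  set x := e.symm (toLex (c, b))
  refine ⟨(ofLex x).1, ?_⟩
  simpa [fstMapOfOrderIso, x] using
    (fst_ofLex_orderIso_apply_eq_iff e (x := toLex ((ofLex x).1, b)) (y := x)).2 rfl

noncomputable def orderIsoOfLexOrderIso (e : α ×ₗ β ≃o γ ×ₗ β) (b : β) : α ≃o γ :=
  StrictMono.orderIsoOfSurjective _ (strictMono_fstMapOfOrderIso e b)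
    (surjective_fstMapOfOrderIso e b)

end Prod.Lex

/-- If the lexicographic products `A ×ₗ ℤ` and `B ×ₗ ℤ` are order-isomorphic,
then `A` and `B` are order-isomorphic. -/
theorem orderIso_of_lex_prod_int_orderIso
    (A B : Type*) [LinearOrder A] [LinearOrder B]
    (h : Nonempty ((A ×ₗ ℤ) ≃o (B ×ₗ ℤ))) :
    Nonempty (A ≃o B) :=
  h.map (Prod.Lex.orderIsoOfLexOrderIso · 0)
end

section
/- The lexicographic orders ℤ × ℤ and ℚ × ℤ are isotypic but not order-isomorphic. -/
/-!
Write `icoCard x y` for the number of points of `[x, y)`, a value in `ℕ∞`. In a linear order in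
which every point has an immediate successor and an immediate predecessor, two tuples whose
pairwise `icoCard`s agree up to the threshold `2 ^ k` satisfy the same formulas of quantifier
depth `k`. This is an Ehrenfeucht–Fraïssé back-and-forth argument: a new point splits the gap
between its neighbours in the tuple into two parts, and a gap that agrees up to `2 * c` can be
split on the other side into two parts that each agree up to `c`.

If we replace the first coordinates of a tuple of `ℤ ×ₗ ℤ` by their casts to `ℚ`, all pairwise
`icoCard`s are unchanged. In the other direction, a tuple of `ℚ ×ₗ ℤ` is pulled back by ranking
its finitely many first coordinates. The two orders are not isomorphic: `icoCard x y = ⊤` exactly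
when `x` lies in an earlier copy of `ℤ` than `y`, and this relation is dense in `ℚ ×ₗ ℤ` but not
in `ℤ ×ₗ ℤ`.
-/

open FirstOrder Language

attribute [local instance] FirstOrder.Language.orderStructure

open Set

section IcoCard

variable {α : Type*} [LinearOrder α] {x y z : α}

noncomputable def icoCard (x y : α) : ℕ∞ := (Ico x y).encard

@[simp] lemma icoCard_self (x : α) : icoCard x x = 0 := by simp [icoCard]

lemma icoCard_eq_zero_iff : icoCard x y = 0 ↔ y ≤ x := by
  simp [icoCard, Ico_eq_empty_iff]

lemma icoCard_ne_zero_iff : icoCard x y ≠ 0 ↔ x < y := by simp [icoCard_eq_zero_iff]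

lemma icoCard_add (hxy : x ≤ y) (hyz : y ≤ z) : icoCard x y + icoCard y z = icoCard x z := by
  rw [icoCard, icoCard, icoCard, ← encard_union_eq Ico_disjoint_Ico_same,
    Ico_union_Ico_eq_Ico hxy hyz]

lemma lt_of_icoCard_lt_icoCard (h : icoCard x y < icoCard x z) : y < z :=
  lt_of_not_ge fun hzy => h.not_ge (encard_mono (Ico_subset_Ico_right hzy))

lemma lt_of_icoCard_lt_icoCard' (h : icoCard y z < icoCard x z) : x < y :=
  lt_of_not_ge fun hyx => h.not_ge (encard_mono (Ico_subset_Ico_left hyx))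

lemma CovBy.icoCard_eq_one (h : x ⋖ y) : icoCard x y = 1 := by
  rw [icoCard, h.Ico_eq, encard_singleton]

lemma OrderIso.icoCard_apply {β : Type*} [LinearOrder β] (e : α ≃o β) (x y : α) :
    icoCard (e x) (e y) = icoCard x y := by
  rw [icoCard, icoCard, ← e.image_Ico, e.injective.injOn.encard_image]

end IcoCard

def HasCovers (α : Type*) [Preorder α] : Prop :=
  (∀ a : α, ∃ b, a ⋖ b) ∧ ∀ b : α, ∃ a, a ⋖ b

namespace HasCovers

variable {α : Type*} [LinearOrder α]

lemma exists_icoCard_eq_right (h : HasCovers α) (x : α) (n : ℕ) :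
    ∃ y, x ≤ y ∧ icoCard x y = n := by
  induction n with
  | zero => exact ⟨x, le_rfl, by simp⟩
  | succ n ih =>
    obtain ⟨y, hxy, hy⟩ := ih
    obtain ⟨y', hyy'⟩ := h.1 y
    refine ⟨y', hxy.trans hyy'.le, ?_⟩
    rw [← icoCard_add hxy hyy'.le, hy, hyy'.icoCard_eq_one]
    rfl

lemma exists_icoCard_eq_left (h : HasCovers α) (z : α) (n : ℕ) :
    ∃ y, y ≤ z ∧ icoCard y z = n := by
  induction n with
  | zero => exact ⟨z, le_rfl, by simp⟩
  | succ n ih =>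
    obtain ⟨y, hyz, hy⟩ := ih
    obtain ⟨y', hy'y⟩ := h.2 y
    refine ⟨y', hy'y.le.trans hyz, ?_⟩
    rw [← icoCard_add hy'y.le hyz, hy, hy'y.icoCard_eq_one, add_comm]
    rfl

lemma exists_icoCard_eq_add (h : HasCovers α) {x z : α} {u v : ℕ∞}
    (hxz : icoCard x z = u + v) (hu : u ≠ 0) (hv : v ≠ 0) (hfin : u ≠ ⊤ ∨ v ≠ ⊤) :
    ∃ y, x < y ∧ y < z ∧ icoCard x y = u ∧ icoCard y z = v := by
  rcases hfin with hu' | hv'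
  · lift u to ℕ using hu'
    obtain ⟨y, hxy, hy⟩ := h.exists_icoCard_eq_right x u
    have hyz : y < z := lt_of_icoCard_lt_icoCard (x := x) <| by
      rw [hy, hxz, add_comm]
      exact ENat.lt_add_left (ENat.natCast_ne_top u) (pos_iff_ne_zero.2 hv)
    refine ⟨y, icoCard_ne_zero_iff.1 (hy ▸ hu), hyz, hy, ?_⟩
    rw [← icoCard_add hxy hyz.le, hy] at hxz
    exact WithTop.add_left_cancel (ENat.natCast_ne_top u) hxz
  · lift v to ℕ using hv'
    obtain ⟨y, hyz, hy⟩ := h.exists_icoCard_eq_left z v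
    have hxy : x < y := lt_of_icoCard_lt_icoCard' (z := z) <| by
      rw [hy, hxz]
      exact ENat.lt_add_left (ENat.natCast_ne_top v) (pos_iff_ne_zero.2 hu)
    refine ⟨y, hxy, icoCard_ne_zero_iff.1 (hy ▸ hv), ?_, hy⟩
    rw [← icoCard_add hxy.le hyz, hy, add_comm, add_comm u] at hxz
    exact WithTop.add_left_cancel (ENat.natCast_ne_top v) hxz

end HasCovers

def TruncEq (c m n : ℕ∞) : Prop := m = n ∨ c ≤ m ∧ c ≤ n

lemma truncEq_min (m c : ℕ∞) : TruncEq c m (min m c) := by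
  rcases le_total m c with h | h
  · exact Or.inl (min_eq_left h).symm
  · exact Or.inr ⟨h, (min_eq_right h).ge⟩

namespace TruncEq

variable {c c' m n m' n' u v w : ℕ∞}

lemma symm (h : TruncEq c m n) : TruncEq c n m := h.imp Eq.symm And.symm

lemma mono (hc : c' ≤ c) (h : TruncEq c m n) : TruncEq c' m n :=
  h.imp_right fun h => ⟨hc.trans h.1, hc.trans h.2⟩

lemma add (h : TruncEq c m n) (h' : TruncEq c m' n') : TruncEq c (m + m') (n + n') := by
  rcases h with rfl | h
  · rcases h' with rfl | h'
    · exact Or.inl rfl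
    · exact Or.inr ⟨h'.1.trans le_add_self, h'.2.trans le_add_self⟩
  · exact Or.inr ⟨h.1.trans le_self_add, h.2.trans le_self_add⟩

lemma eq_zero_iff (hc : c ≠ 0) (h : TruncEq c m n) : m = 0 ↔ n = 0 := by
  rcases h with rfl | ⟨hm, hn⟩
  · rfl
  · exact iff_of_false (fun h => hc (le_zero_iff.1 (h ▸ hm)))
      fun h => hc (le_zero_iff.1 (h ▸ hn))

lemma exists_add_eq_of_lt (hc : c ≠ ⊤) (hu : u < c) (h : TruncEq (2 * c) (u + v) w) :
    ∃ v', w = u + v' ∧ TruncEq c v v' := by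
  rcases h with rfl | ⟨h₁, h₂⟩
  · exact ⟨v, rfl, Or.inl rfl⟩
  lift c to ℕ using hc
  lift u to ℕ using hu.ne_top
  refine ⟨w - u, (add_tsub_cancel_of_le ?_).symm, Or.inr ⟨?_, ?_⟩⟩
  all_goals
    induction v using ENat.recTopCoe <;> induction w using ENat.recTopCoe <;>
      simp_all <;> norm_cast at * <;> omega

lemma exists_add_eq (hc : c ≠ ⊤) (h : TruncEq (2 * c) (u + v) w) :
    ∃ u' v', w = u' + v' ∧ TruncEq c u u' ∧ TruncEq c v v' ∧ (u' ≠ ⊤ ∨ v' ≠ ⊤) := by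
  by_cases hu : u < c
  · obtain ⟨v', rfl, hv⟩ := exists_add_eq_of_lt hc hu h
    exact ⟨u, v', rfl, Or.inl rfl, hv, Or.inl hu.ne_top⟩
  by_cases hv : v < c
  · obtain ⟨u', rfl, hu'⟩ := exists_add_eq_of_lt hc hv (add_comm u v ▸ h)
    exact ⟨u', v, add_comm _ _, hu', Or.inl rfl, Or.inr hv.ne_top⟩
  rw [not_lt] at hu hv
  have hw : c + c ≤ w := by
    rw [← two_mul]
    rcases h with rfl | h
    · rw [two_mul]
      exact add_le_add hu hv
    · exact h.2
  exact ⟨c, w - c, (add_tsub_cancel_of_le (le_add_self.trans hw)).symm, Or.inr ⟨hu, le_rfl⟩,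
    Or.inr ⟨hv, ENat.le_sub_of_add_le_left hc hw⟩, Or.inl hc⟩

end TruncEq

section Tuples

variable {M N : Type*} [LinearOrder M] [LinearOrder N] {ι κ : Type*} {c : ℕ∞}

def IcoCardTruncEq (c : ℕ∞) (a : ι → M) (b : ι → N) : Prop :=
  ∀ i j, TruncEq c (icoCard (a i) (a j)) (icoCard (b i) (b j))

def PlacedAlike (c : ℕ∞) (a : ι → M) (b : ι → N) (x : M) (y : N) : Prop :=
  ∀ i, TruncEq c (icoCard (a i) x) (icoCard (b i) y) ∧
    TruncEq c (icoCard x (a i)) (icoCard y (b i))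

lemma PlacedAlike.symm {a : ι → M} {b : ι → N} {x : M} {y : N} (h : PlacedAlike c a b x y) :
    PlacedAlike c b a y x :=
  fun i => ⟨(h i).1.symm, (h i).2.symm⟩

namespace IcoCardTruncEq

variable {a : ι → M} {b : ι → N}

lemma symm (h : IcoCardTruncEq c a b) : IcoCardTruncEq c b a := fun i j => (h i j).symm

lemma mono {c' : ℕ∞} (hc : c' ≤ c) (h : IcoCardTruncEq c a b) : IcoCardTruncEq c' a b :=
  fun i j => (h i j).mono hc

lemma lt_iff (hc : c ≠ 0) (h : IcoCardTruncEq c a b) (i j : ι) : a i < a j ↔ b i < b j := by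
  rw [← icoCard_ne_zero_iff, ← icoCard_ne_zero_iff, ne_eq, (h i j).eq_zero_iff hc, ne_eq]

lemma le_iff (hc : c ≠ 0) (h : IcoCardTruncEq c a b) (i j : ι) : a i ≤ a j ↔ b i ≤ b j := by
  simpa only [not_lt] using (h.lt_iff hc j i).not

lemma eq_iff (hc : c ≠ 0) (h : IcoCardTruncEq c a b) (i j : ι) : a i = a j ↔ b i = b j := by
  rw [le_antisymm_iff, le_antisymm_iff, h.le_iff hc, h.le_iff hc]

lemma placedAlike (h : IcoCardTruncEq c a b) (i : ι) : PlacedAlike c a b (a i) (b i) :=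
  fun j => ⟨h j i, h i j⟩

lemma of_placedAlike {x : M} {y : N} {a' : κ → M} {b' : κ → N} (h : IcoCardTruncEq c a b)
    (hxy : PlacedAlike c a b x y)
    (hab' : ∀ k, (∃ i, a' k = a i ∧ b' k = b i) ∨ (a' k = x ∧ b' k = y)) :
    IcoCardTruncEq c a' b' := by
  intro k l
  rcases hab' k with ⟨i, hai, hbi⟩ | ⟨hax, hby⟩ <;>
    rcases hab' l with ⟨j, haj, hbj⟩ | ⟨hax', hby'⟩ <;> simp only [*]
  · exact h i j
  · exact (hxy i).1
  · exact (hxy j).2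
  · exact Or.inl (by rw [icoCard_self, icoCard_self])

end IcoCardTruncEq

end Tuples

section Forth

variable {M N : Type*} [LinearOrder M] [LinearOrder N] {ι : Type*} {c : ℕ∞}

lemma forall_not_lt_or_exists_max_lt [Fintype ι] (a : ι → M) (x : M) :
    (∀ j, ¬ a j < x) ∨ ∃ i, a i < x ∧ ∀ j, a j < x → a j ≤ a i := by
  classical
  rcases (Finset.univ.filter (a · < x)).eq_empty_or_nonempty with h | h
  · exact Or.inl fun j hj => by
      simpa [hj] using Finset.filter_eq_empty_iff.1 h (Finset.mem_univ j)
  · obtain ⟨i, hi, hmax⟩ := Finset.exists_max_image _ a h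
    simp only [Finset.mem_filter, Finset.mem_univ, true_and] at hi hmax
    exact Or.inr ⟨i, hi, hmax⟩

lemma forall_not_gt_or_exists_min_gt [Fintype ι] (a : ι → M) (x : M) :
    (∀ j, ¬ x < a j) ∨ ∃ i, x < a i ∧ ∀ j, x < a j → a i ≤ a j :=
  forall_not_lt_or_exists_max_lt (M := Mᵒᵈ) a x

lemma HasCovers.exists_truncEq_icoCard_right (hN : HasCovers N) (hc₀ : c ≠ 0) (hc : c ≠ ⊤)
    (z : N) {u : ℕ∞} (hu : u ≠ 0) : ∃ y, z < y ∧ TruncEq c u (icoCard z y) := by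
  obtain ⟨y, -, hy⟩ := hN.exists_icoCard_eq_right z (min u c).toNat
  rw [ENat.natCast_toNat (ne_top_of_le_ne_top hc (min_le_right u c))] at hy
  have hmin : min u c ≠ 0 := (lt_min (pos_iff_ne_zero.2 hu) (pos_iff_ne_zero.2 hc₀)).ne'
  exact ⟨y, icoCard_ne_zero_iff.1 (hy ▸ hmin), hy ▸ truncEq_min u c⟩

lemma HasCovers.exists_truncEq_icoCard_left (hN : HasCovers N) (hc₀ : c ≠ 0) (hc : c ≠ ⊤)
    (z : N) {u : ℕ∞} (hu : u ≠ 0) : ∃ y, y < z ∧ TruncEq c u (icoCard y z) := by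
  obtain ⟨y, -, hy⟩ := hN.exists_icoCard_eq_left z (min u c).toNat
  rw [ENat.natCast_toNat (ne_top_of_le_ne_top hc (min_le_right u c))] at hy
  have hmin : min u c ≠ 0 := (lt_min (pos_iff_ne_zero.2 hu) (pos_iff_ne_zero.2 hc₀)).ne'
  exact ⟨y, icoCard_ne_zero_iff.1 (hy ▸ hmin), hy ▸ truncEq_min u c⟩

namespace IcoCardTruncEq

variable {a : ι → M} {b : ι → N} {x : M} {y : N}

lemma forall_lt_of_max (hc : c ≠ 0) (h : IcoCardTruncEq c a b) {i : ι}
    (hmax : ∀ j, a j < x → a j ≤ a i) (hi : a i < x) (hy : b i < y)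
    (hxy : TruncEq c (icoCard (a i) x) (icoCard (b i) y)) :
    ∀ j, a j < x → b j < y ∧ TruncEq c (icoCard (a j) x) (icoCard (b j) y) := by
  intro j hj
  have ha := hmax j hj
  have hb := (h.le_iff hc j i).1 ha
  refine ⟨hb.trans_lt hy, ?_⟩
  rw [← icoCard_add ha hi.le, ← icoCard_add hb hy.le]
  exact (h j i).add hxy

lemma forall_gt_of_min (hc : c ≠ 0) (h : IcoCardTruncEq c a b) {i : ι}
    (hmin : ∀ j, x < a j → a i ≤ a j) (hi : x < a i) (hy : y < b i)
    (hxy : TruncEq c (icoCard x (a i)) (icoCard y (b i))) :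
    ∀ j, x < a j → y < b j ∧ TruncEq c (icoCard x (a j)) (icoCard y (b j)) := by
  intro j hj
  have ha := hmin j hj
  have hb := (h.le_iff hc i j).1 ha
  refine ⟨hy.trans_le hb, ?_⟩
  rw [← icoCard_add hi.le ha, ← icoCard_add hy.le hb]
  exact hxy.add (h i j)

end IcoCardTruncEq

lemma placedAlike_of_forall_lt_of_forall_gt {a : ι → M} {b : ι → N} {x : M} {y : N}
    (hx : ∀ j, a j ≠ x)
    (hlt : ∀ j, a j < x → b j < y ∧ TruncEq c (icoCard (a j) x) (icoCard (b j) y))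
    (hgt : ∀ j, x < a j → y < b j ∧ TruncEq c (icoCard x (a j)) (icoCard y (b j))) :
    PlacedAlike c a b x y := by
  intro j
  rcases (hx j).lt_or_gt with hj | hj
  · obtain ⟨hb, hd⟩ := hlt j hj
    exact ⟨hd, Or.inl (by rw [icoCard_eq_zero_iff.2 hj.le, icoCard_eq_zero_iff.2 hb.le])⟩
  · obtain ⟨hb, hd⟩ := hgt j hj
    exact ⟨Or.inl (by rw [icoCard_eq_zero_iff.2 hj.le, icoCard_eq_zero_iff.2 hb.le]), hd⟩

theorem IcoCardTruncEq.exists_placedAlike [Fintype ι] [Nonempty N] (hN : HasCovers N)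
    (hc₀ : c ≠ 0) (hc : c ≠ ⊤) {a : ι → M} {b : ι → N} (h : IcoCardTruncEq (2 * c) a b)
    (x : M) : ∃ y, PlacedAlike c a b x y := by
  have h' := h.mono (le_mul_of_one_le_left' one_le_two)
  by_cases hx : ∃ i, a i = x
  · obtain ⟨i, rfl⟩ := hx
    exact ⟨b i, h'.placedAlike i⟩
  simp only [not_exists] at hx
  obtain hlt | ⟨i, hi, hmax⟩ := forall_not_lt_or_exists_max_lt a x <;>
    obtain hgt | ⟨j, hj, hmin⟩ := forall_not_gt_or_exists_min_gt a x
  · exact ⟨Classical.arbitrary N, placedAlike_of_forall_lt_of_forall_gt hx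
      (fun k hk => (hlt k hk).elim) fun k hk => (hgt k hk).elim⟩
  · obtain ⟨y, hy, hxy⟩ :=
      hN.exists_truncEq_icoCard_left hc₀ hc (b j) (icoCard_ne_zero_iff.2 hj)
    exact ⟨y, placedAlike_of_forall_lt_of_forall_gt hx (fun k hk => (hlt k hk).elim)
      (h'.forall_gt_of_min hc₀ hmin hj hy hxy)⟩
  · obtain ⟨y, hy, hxy⟩ :=
      hN.exists_truncEq_icoCard_right hc₀ hc (b i) (icoCard_ne_zero_iff.2 hi)
    exact ⟨y, placedAlike_of_forall_lt_of_forall_gt hx (h'.forall_lt_of_max hc₀ hmax hi hy hxy)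
      fun k hk => (hgt k hk).elim⟩
  · have hij : TruncEq (2 * c) (icoCard (a i) x + icoCard x (a j)) (icoCard (b i) (b j)) :=
      icoCard_add hi.le hj.le ▸ h i j
    obtain ⟨u, v, huv, hu, hv, hfin⟩ := hij.exists_add_eq hc
    obtain ⟨y, hiy, hyj, rfl, rfl⟩ := hN.exists_icoCard_eq_add huv
      (mt (hu.eq_zero_iff hc₀).2 (icoCard_ne_zero_iff.2 hi))
      (mt (hv.eq_zero_iff hc₀).2 (icoCard_ne_zero_iff.2 hj)) hfin
    exact ⟨y, placedAlike_of_forall_lt_of_forall_gt hx (h'.forall_lt_of_max hc₀ hmax hi hiy hu)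
      (h'.forall_gt_of_min hc₀ hmin hj hyj hv)⟩

end Forth
section Realize

variable {M N : Type*} [LinearOrder M] [LinearOrder N] {α : Type*}

lemma FirstOrder.Language.Term.exists_eq_var_of_order {γ : Type*} (t : Language.order.Term γ) :
    ∃ i, t = Term.var i := by
  cases t with
  | var i => exact ⟨i, rfl⟩
  | func f _ => exact isEmptyElim f

lemma IcoCardTruncEq.snoc {c : ℕ∞} {m : ℕ} {v : α → M} {w : α → N} {xs : Fin m → M}
    {ys : Fin m → N} {x : M} {y : N} (h : IcoCardTruncEq c (Sum.elim v xs) (Sum.elim w ys))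
    (hxy : PlacedAlike c (Sum.elim v xs) (Sum.elim w ys) x y) :
    IcoCardTruncEq c (Sum.elim v (Fin.snoc xs x)) (Sum.elim w (Fin.snoc ys y)) := by
  refine h.of_placedAlike hxy ?_
  rintro (i | i)
  · exact Or.inl ⟨Sum.inl i, rfl, rfl⟩
  · induction i using Fin.lastCases with
    | last => exact Or.inr ⟨by simp, by simp⟩
    | cast i => exact Or.inl ⟨Sum.inr i, by simp, by simp⟩

theorem exists_realize_iff_of_icoCardTruncEq [Fintype α] [Nonempty M] [Nonempty N]
    (hM : HasCovers M) (hN : HasCovers N) (v : α → M) (w : α → N) {m : ℕ}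
    (φ : Language.order.BoundedFormula α m) :
    ∃ k : ℕ, ∀ xs ys, IcoCardTruncEq (2 ^ k) (Sum.elim v xs) (Sum.elim w ys) →
      (φ.Realize v xs ↔ φ.Realize w ys) := by
  have hone : (2 : ℕ∞) ^ 0 ≠ 0 := by simp
  induction φ with
  | falsum => exact ⟨0, fun _ _ _ => Iff.rfl⟩
  | equal t₁ t₂ =>
    obtain ⟨i, rfl⟩ := t₁.exists_eq_var_of_order
    obtain ⟨j, rfl⟩ := t₂.exists_eq_var_of_order
    exact ⟨0, fun xs ys h => h.eq_iff hone i j⟩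
  | rel R ts =>
    cases R with
    | le =>
      obtain ⟨i, hi⟩ := (ts 0).exists_eq_var_of_order
      obtain ⟨j, hj⟩ := (ts 1).exists_eq_var_of_order
      refine ⟨0, fun xs ys h => ?_⟩
      change (ts 0).realize _ ≤ (ts 1).realize _ ↔ (ts 0).realize _ ≤ (ts 1).realize _
      rw [hi, hj]
      exact h.le_iff hone i j
  | imp f g ihf ihg =>
    obtain ⟨k, hk⟩ := ihf
    obtain ⟨l, hl⟩ := ihg
    refine ⟨max k l, fun xs ys h => imp_congr (hk xs ys (h.mono ?_)) (hl xs ys (h.mono ?_))⟩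
    all_goals exact pow_right_mono₀ one_le_two (by omega)
  | all f ih =>
    obtain ⟨k, hk⟩ := ih
    refine ⟨k + 1, fun xs ys h => ?_⟩
    rw [pow_succ'] at h
    have hc₀ : (2 : ℕ∞) ^ k ≠ 0 := pow_ne_zero k two_ne_zero
    have hc : (2 : ℕ∞) ^ k ≠ ⊤ := WithTop.pow_ne_top (ENat.natCast_ne_top 2)
    have h' := h.mono (le_mul_of_one_le_left' one_le_two)
    simp only [BoundedFormula.realize_all]
    constructor
    · intro H y
      obtain ⟨x, hx⟩ := h.symm.exists_placedAlike hM hc₀ hc y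
      exact (hk _ _ (h'.snoc hx.symm)).1 (H x)
    · intro H x
      obtain ⟨y, hy⟩ := h.exists_placedAlike hN hc₀ hc x
      exact (hk _ _ (h'.snoc hy)).2 (H y)

theorem realize_formula_iff_of_icoCard_eq [Fintype α] [Nonempty M] [Nonempty N]
    (hM : HasCovers M) (hN : HasCovers N) {a : α → M} {b : α → N}
    (hab : ∀ i j, icoCard (a i) (a j) = icoCard (b i) (b j)) (φ : Language.order.Formula α) :
    φ.Realize a ↔ φ.Realize b := by
  obtain ⟨k, hk⟩ := exists_realize_iff_of_icoCardTruncEq hM hN a b φ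
  refine hk default default ?_
  rintro (i | i) (j | j)
  · exact Or.inl (hab i j)
  all_goals exact Fin.elim0 ‹Fin 0›

end Realize

lemma Set.Finite.exists_strictMonoOn_nat {α : Type*} [LinearOrder α] {s : Set α}
    (hs : s.Finite) : ∃ f : α → ℕ, StrictMonoOn f s := by
  classical
  refine ⟨fun r => (hs.toFinset.filter (· < r)).card,
    fun r hr r' _ h => Finset.card_lt_card ?_⟩
  refine (Finset.ssubset_iff_of_subset fun t ht => ?_).2 ⟨r, ?_, ?_⟩
  · simp only [Finset.mem_filter] at ht ⊢
    exact ⟨ht.1, ht.2.trans h⟩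
  all_goals simp [hr, h]

section Lex

variable {α β γ : Type*} [LinearOrder α] [LinearOrder β] [LinearOrder γ]

lemma hasCovers_int : HasCovers ℤ :=
  ⟨fun z => ⟨z + 1, Order.covBy_add_one z⟩, fun z => ⟨z - 1, Order.sub_one_covBy z⟩⟩

lemma HasCovers.lex (h : HasCovers β) : HasCovers (α ×ₗ β) := by
  refine ⟨fun x => ?_, fun x => ?_⟩
  · obtain ⟨q, hq⟩ := h.1 (ofLex x).2
    exact ⟨toLex ((ofLex x).1, q), Prod.Lex.covBy_iff.2 (Or.inl ⟨rfl, hq⟩)⟩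
  · obtain ⟨q, hq⟩ := h.2 (ofLex x).2
    exact ⟨toLex ((ofLex x).1, q), Prod.Lex.covBy_iff.2 (Or.inl ⟨rfl, hq⟩)⟩

lemma icoCard_toLex_of_eq (p : α) (q q' : β) :
    icoCard (toLex (p, q)) (toLex (p, q')) = icoCard q q' := by
  have : Ico (toLex (p, q)) (toLex (p, q')) = (fun t => toLex (p, t)) '' Ico q q' := by
    ext x
    obtain ⟨⟨r, t⟩, rfl⟩ := toLex.surjective x
    simp only [mem_Ico, Prod.Lex.toLex_le_toLex, Prod.Lex.toLex_lt_toLex, mem_image,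
      EmbeddingLike.apply_eq_iff_eq, Prod.mk.injEq, exists_eq_right_right]
    rcases lt_trichotomy p r with h | rfl | h
    · simp [h.ne, h.ne', h.not_gt]
    · simp
    · simp [h.ne, h.ne', h.not_gt]
  rw [icoCard, icoCard, this, InjOn.encard_image fun _ _ _ _ h => by simpa using h]

lemma icoCard_toLex_of_lt [NoMaxOrder β] {p p' : α} (h : p < p') (q q' : β) :
    icoCard (toLex (p, q)) (toLex (p', q')) = ⊤ := by
  refine Infinite.encard_eq (((Ici_infinite q).image
    (f := fun t => toLex (p, t)) fun _ _ _ _ h => by simpa using h).mono ?_)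
  rintro _ ⟨t, ht, rfl⟩
  exact ⟨Prod.Lex.toLex_le_toLex.2 (Or.inr ⟨rfl, ht⟩), Prod.Lex.toLex_lt_toLex.2 (Or.inl h)⟩

lemma icoCard_toLex_of_gt {p p' : α} (h : p' < p) (q q' : β) :
    icoCard (toLex (p, q)) (toLex (p', q')) = 0 :=
  icoCard_eq_zero_iff.2 (Prod.Lex.toLex_le_toLex.2 (Or.inl h))

lemma icoCard_lex_eq_top_iff [LocallyFiniteOrder β] [NoMaxOrder β] {x y : α ×ₗ β} :
    icoCard x y = ⊤ ↔ (ofLex x).1 < (ofLex y).1 := by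
  obtain ⟨⟨p, q⟩, rfl⟩ := toLex.surjective x
  obtain ⟨⟨p', q'⟩, rfl⟩ := toLex.surjective y
  rcases lt_trichotomy p p' with h | rfl | h
  · simp [icoCard_toLex_of_lt h, h]
  · rw [icoCard_toLex_of_eq, ofLex_toLex, ofLex_toLex]
    exact iff_of_false (finite_Ico q q').encard_lt_top.ne (lt_irrefl p)
  · simp [icoCard_toLex_of_gt h, h.not_gt]

lemma icoCard_toLex_map_fst [NoMaxOrder β] {f : α → γ} {s : Set α} (hf : StrictMonoOn f s)
    {x y : α ×ₗ β} (hx : (ofLex x).1 ∈ s) (hy : (ofLex y).1 ∈ s) :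
    icoCard (toLex (f (ofLex x).1, (ofLex x).2)) (toLex (f (ofLex y).1, (ofLex y).2)) =
      icoCard x y := by
  obtain ⟨⟨p, q⟩, rfl⟩ := toLex.surjective x
  obtain ⟨⟨p', q'⟩, rfl⟩ := toLex.surjective y
  simp only [ofLex_toLex] at hx hy ⊢
  rcases lt_trichotomy p p' with h | rfl | h
  · rw [icoCard_toLex_of_lt h, icoCard_toLex_of_lt (hf hx hy h)]
  · rw [icoCard_toLex_of_eq, icoCard_toLex_of_eq]
  · rw [icoCard_toLex_of_gt h, icoCard_toLex_of_gt (hf hy hx h)]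

lemma exists_lex_tuple_icoCard_eq [NoMaxOrder β] {ι : Type*} (a : ι → α ×ₗ β) {f : α → γ}
    (hf : StrictMonoOn f (range fun i => (ofLex (a i)).1)) :
    ∃ b : ι → γ ×ₗ β, ∀ i j, icoCard (a i) (a j) = icoCard (b i) (b j) :=
  ⟨fun i => toLex (f (ofLex (a i)).1, (ofLex (a i)).2),
    fun i j => (icoCard_toLex_map_fst hf ⟨i, rfl⟩ ⟨j, rfl⟩).symm⟩

lemma denselyOrdered_of_orderIso_lex [LocallyFiniteOrder β] [NoMaxOrder β] [Nonempty β]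
    [DenselyOrdered γ] (e : α ×ₗ β ≃o γ ×ₗ β) : DenselyOrdered α := by
  refine ⟨fun p p' h => ?_⟩
  obtain ⟨q⟩ : Nonempty β := inferInstance
  have hpp' := e.icoCard_apply (toLex (p, q)) (toLex (p', q))
  rw [icoCard_toLex_of_lt h, icoCard_lex_eq_top_iff] at hpp'
  obtain ⟨r, hpr, hrp'⟩ := exists_between hpp'
  have hw : e (e.symm (toLex (r, q))) = toLex (r, q) := e.apply_symm_apply _
  refine ⟨(ofLex (e.symm (toLex (r, q)))).1, ?_, ?_⟩
  · have h₁ := e.icoCard_apply (toLex (p, q)) (e.symm (toLex (r, q)))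
    rw [hw, icoCard_lex_eq_top_iff.2 hpr] at h₁
    exact icoCard_lex_eq_top_iff.1 h₁.symm
  · have h₂ := e.icoCard_apply (e.symm (toLex (r, q))) (toLex (p', q))
    rw [hw, icoCard_lex_eq_top_iff.2 hrp'] at h₂
    exact icoCard_lex_eq_top_iff.1 h₂.symm

end Lex

/-- The lexicographic orders `ℤ ×ₗ ℤ` and `ℚ ×ₗ ℤ` are isotypic but not
order-isomorphic. -/
theorem lex_int_int_isotypic_not_orderIso_lex_rat_int :
    Isotypic Language.order (ℤ ×ₗ ℤ) (ℚ ×ₗ ℤ) ∧ IsEmpty ((ℤ ×ₗ ℤ) ≃o (ℚ ×ₗ ℤ)) := by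
  have hZ : HasCovers (ℤ ×ₗ ℤ) := hasCovers_int.lex
  have hQ : HasCovers (ℚ ×ₗ ℤ) := hasCovers_int.lex
  refine ⟨⟨fun n a => ?_, fun n b => ?_⟩, ⟨fun e => ?_⟩⟩
  · obtain ⟨b, hab⟩ := exists_lex_tuple_icoCard_eq a
      ((Int.cast_strictMono (R := ℚ)).strictMonoOn _)
    exact ⟨b, realize_formula_iff_of_icoCard_eq hZ hQ hab⟩
  · obtain ⟨f, hf⟩ := (finite_range fun i ↦ (ofLex (b i)).1).exists_strictMonoOn_nat
    obtain ⟨a, hab⟩ := exists_lex_tuple_icoCard_eq b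
      ((Nat.strictMono_cast (α := ℤ)).comp_strictMonoOn hf)
    exact ⟨a, realize_formula_iff_of_icoCard_eq hZ hQ fun i j => (hab i j).symm⟩
  · have := denselyOrdered_of_orderIso_lex e
    obtain ⟨z, h₀, h₁⟩ := exists_between (zero_lt_one' ℤ)
    omega
end

section
/- Let K be a field admitting two valuation rings 𝒪₁ and 𝒪₂ with respect to both of which K is henselian, and suppose both residue fields are isomorphic to ℚ. Then 𝒪₁ = 𝒪₂. -/
open Polynomial

section Aux

variable {K : Type*} [Field K]

private lemma val_lt_one_iff_res (A : ValuationSubring K) (a : A) :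
    A.valuation a < 1 ↔ IsLocalRing.residue A a = 0 := by
  rw [IsLocalRing.residue_eq_zero_iff, ValuationSubring.valuation_lt_one_iff]

/-- Nonzero integers have valuation 1 when the residue field is `ℚ`. -/
private lemma int_val_one (A : ValuationSubring K)
    (e : IsLocalRing.ResidueField A ≃+* ℚ) {n : ℤ} (hn : n ≠ 0) :
    A.valuation ((n : K)) = 1 := by
  have hmem : ((n : K)) ∈ A := by
    have : (((n : A) : K)) ∈ A := (n : A).2
    simpa using this
  have hle : A.valuation ((n : K)) ≤ 1 := (A.valuation_le_one_iff _).mpr hmem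
  rcases lt_or_eq_of_le hle with hlt | heq
  · exfalso
    have hcoe : (((n : A) : K)) = (n : K) := by push_cast; ring
    have : A.valuation (((n : A) : K)) < 1 := by rwa [hcoe]
    have hres : IsLocalRing.residue A ((n : A)) = 0 := (val_lt_one_iff_res A _).mp this
    have : e (IsLocalRing.residue A ((n : A))) = (n : ℚ) := by
      rw [show ((n : A)) = ((n : ℤ) : A) by norm_cast]
      rw [map_intCast (IsLocalRing.residue A), map_intCast e]
    rw [hres, map_zero] at this
    exact hn (by exact_mod_cast this.symm)
  · exact heq

/-- In a henselian valuation ring with residue characteristic 0 (residue `ℚ`),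
elements `≡ 1 mod 𝔪` are squares. -/
private lemma exists_sq (A : ValuationSubring K) [HenselianLocalRing A]
    (e : IsLocalRing.ResidueField A ≃+* ℚ) {c : K}
    (hc : A.valuation (c - 1) < 1) : ∃ y : K, y ^ 2 = c := by
  have hcA : c ∈ A := by
    apply A.mem_of_valuation_le_one
    have : A.valuation c = A.valuation ((c - 1) + 1) := by ring_nf
    rw [this]
    calc A.valuation ((c - 1) + 1) ≤ max (A.valuation (c - 1)) (A.valuation 1) :=
          A.valuation.map_add _ _
      _ ≤ 1 := by rw [map_one]; exact max_le hc.le le_rfl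
  set cA : A := ⟨c, hcA⟩ with hcAdef
  set f : Polynomial A := X ^ 2 - C cA with hf
  have hmonic : f.Monic := monic_X_pow_sub_C cA (by norm_num)
  have heval : f.eval 1 ∈ IsLocalRing.maximalIdeal A := by
    have h1 : f.eval 1 = 1 - cA := by simp [hf]
    rw [h1, ValuationSubring.valuation_lt_one_iff]
    have hcoe : (((1 - cA : A) : K)) = 1 - c := by push_cast; ring
    rw [hcoe, Valuation.map_sub_swap]
    exact hc
  have hderiv : IsUnit ((derivative f).eval 1) := by
    have h2 : (derivative f).eval 1 = 2 := by
      have : derivative f = C 2 * X := by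
        rw [hf, derivative_sub, derivative_C, derivative_X_pow]
        norm_num
      rw [this]
      simp
    rw [h2]
    have hval : A.valuation (((2 : A) : K)) = 1 := by
      have : (((2 : A) : K)) = ((2 : ℤ) : K) := by norm_cast
      rw [this]
      exact int_val_one A e (by norm_num)
    by_contra hu
    have : (2 : A) ∈ IsLocalRing.maximalIdeal A := by
      rw [IsLocalRing.mem_maximalIdeal]; exact hu
    rw [ValuationSubring.valuation_lt_one_iff, hval] at this
    exact lt_irrefl _ this
  obtain ⟨a, ha, -⟩ := HenselianLocalRing.is_henselian f hmonic 1 heval hderiv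
  refine ⟨(a : K), ?_⟩
  have : a ^ 2 - cA = 0 := by simpa [hf, Polynomial.IsRoot] using ha
  have h3 : a ^ 2 = cA := by rwa [sub_eq_zero] at this
  calc ((a : K)) ^ 2 = ((a ^ 2 : A) : K) := by push_cast; ring
    _ = c := by rw [h3]

/-- `-1` is not a square in `K` when `K` has a valuation ring with residue field `ℚ`. -/
private lemma no_sqrt_neg_one (A : ValuationSubring K)
    (e : IsLocalRing.ResidueField A ≃+* ℚ) (w : K) (hw : w ^ 2 = -1) : False := by
  have hw0 : w ≠ 0 := by
    intro h; rw [h] at hw; norm_num at hw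
  have hwA : w ∈ A := by
    rcases A.mem_or_inv_mem w with h | h
    · exact h
    · have hinv : w⁻¹ = -w := by
        have hm : (-w) * w = 1 := by linear_combination -hw
        exact (eq_inv_of_mul_eq_one_left hm).symm
      rw [hinv] at h
      simpa using A.toSubring.neg_mem h
  set wA : A := ⟨w, hwA⟩
  have hsq : wA ^ 2 = -1 := by
    apply Subtype.ext
    push_cast
    exact hw
  have : (e (IsLocalRing.residue A wA)) ^ 2 = -1 := by
    rw [← map_pow, ← map_pow, hsq]
    simp
  nlinarith [sq_nonneg (e (IsLocalRing.residue A wA))]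

/-- Two incomparable valuation subrings: the maximal ideal of one is not
contained in the other. -/
private lemma exists_nonunit_notMem {A B : ValuationSubring K}
    (hAB : ¬A ≤ B) (hBA : ¬B ≤ A) :
    ∃ u : K, A.valuation u < 1 ∧ u ∉ B := by
  by_contra hcon
  push_neg at hcon
  by_cases hcase : ∀ x : K, A.valuation x < 1 → B.valuation x < 1
  · apply hBA
    intro b hb
    by_contra hbA
    have hb0 : b ≠ 0 := by rintro rfl; exact hbA (zero_mem _)
    have h1 : (1 : _) < A.valuation b := by
      by_contra h; exact hbA (A.mem_of_valuation_le_one b (not_lt.mp h))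
    have h2 : A.valuation b⁻¹ < 1 := by
      rw [map_inv₀]
      exact (inv_lt_one₀ (zero_lt_one.trans h1)).mpr h1
    have h3 : B.valuation b⁻¹ < 1 := hcase _ h2
    have h4 : B.valuation b ≤ 1 := (B.valuation_le_one_iff _).mpr hb
    have : B.valuation (b * b⁻¹) < 1 := by
      rw [map_mul]
      calc B.valuation b * B.valuation b⁻¹ ≤ 1 * B.valuation b⁻¹ :=
            mul_le_mul_left h4 _
        _ = B.valuation b⁻¹ := one_mul _
        _ < 1 := h3
    rw [mul_inv_cancel₀ hb0, map_one] at this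
    exact lt_irrefl _ this
  · push_neg at hcase
    obtain ⟨x, hx1, hx2⟩ := hcase
    apply hAB
    intro a ha
    have hax : A.valuation (a * x) < 1 := by
      rw [map_mul]
      calc A.valuation a * A.valuation x ≤ 1 * A.valuation x :=
            mul_le_mul_left ((A.valuation_le_one_iff _).mpr ha) _
        _ = A.valuation x := one_mul _
        _ < 1 := hx1
    have haxB : a * x ∈ B := hcon _ hax
    have hxB : x ∈ B := hcon _ hx1
    have hvBx : B.valuation x = 1 :=
      le_antisymm ((B.valuation_le_one_iff _).mpr hxB) hx2
    apply B.mem_of_valuation_le_one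
    calc B.valuation a = B.valuation a * B.valuation x := by rw [hvBx, mul_one]
      _ = B.valuation (a * x) := (map_mul _ _ _).symm
      _ ≤ 1 := (B.valuation_le_one_iff _).mpr haxB

/-- If `A ≤ B` and both residue fields are `ℚ`, then `B ≤ A`. -/
private lemma le_of_le_rat {A B : ValuationSubring K}
    (eA : IsLocalRing.ResidueField A ≃+* ℚ) (eB : IsLocalRing.ResidueField B ≃+* ℚ)
    (hAB : A ≤ B) : B ≤ A := by
  intro x hx
  set ξ : IsLocalRing.ResidueField B := IsLocalRing.residue B ⟨x, hx⟩ with hξ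
  set q : ℚ := eB ξ with hq
  have hden : (q.den : ℚ) ≠ 0 := by exact_mod_cast q.den_nz
  -- the element den*x - num has residue 0 in B
  set cB : B := (q.den : B) * ⟨x, hx⟩ - ((q.num : ℤ) : B) with hcB
  have hres : IsLocalRing.residue B cB = 0 := by
    apply eB.injective
    rw [map_zero, hcB]
    have key : eB (IsLocalRing.residue B ((q.den : B) * ⟨x, hx⟩ - ((q.num : ℤ) : B)))
        = (q.den : ℚ) * q - (q.num : ℚ) := by
      rw [map_sub, map_mul, map_sub, map_mul]
      rw [show ((q.den : B)) = ((q.den : ℕ) : B) by norm_cast]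
      rw [map_natCast (IsLocalRing.residue B), map_intCast (IsLocalRing.residue B),
        map_natCast eB, map_intCast eB]
    rw [key]
    have h2 := div_mul_cancel₀ ((q.num : ℚ)) hden
    rw [Rat.num_div_den q] at h2
    rw [mul_comm] at h2
    linear_combination h2
  have hvB : B.valuation ((q.den : K) * x - (q.num : K)) < 1 := by
    have hcoe : ((cB : B) : K) = (q.den : K) * x - (q.num : K) := by
      rw [hcB]; push_cast; ring
    rw [← hcoe]
    exact (val_lt_one_iff_res B cB).mpr hres
  have hvA : A.valuation ((q.den : K) * x - (q.num : K)) < 1 := by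
    have h1 : ((q.den : K) * x - (q.num : K)) ∈ B.nonunits :=
      B.mem_nonunits_iff.mpr hvB
    exact A.mem_nonunits_iff.mp (ValuationSubring.nonunits_le_nonunits.mpr hAB h1)
  have hnum : A.valuation ((q.num : K)) ≤ 1 := by
    rw [A.valuation_le_one_iff]
    have : (((q.num : A) : K)) ∈ A := (q.num : A).2
    simpa using this
  have hdx : A.valuation ((q.den : K) * x) ≤ 1 := by
    have : (q.den : K) * x = ((q.den : K) * x - (q.num : K)) + (q.num : K) := by ring
    rw [this]
    calc A.valuation _ ≤ max (A.valuation ((q.den : K) * x - (q.num : K)))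
          (A.valuation ((q.num : K))) := A.valuation.map_add _ _
      _ ≤ 1 := max_le hvA.le hnum
  have hdval : A.valuation ((q.den : K)) = 1 := by
    have : ((q.den : K)) = (((q.den : ℤ)) : K) := by push_cast; ring
    rw [this]
    exact int_val_one A eA (by exact_mod_cast q.den_nz)
  apply A.mem_of_valuation_le_one
  calc A.valuation x = A.valuation ((q.den : K)) * A.valuation x := by
        rw [hdval, one_mul]
    _ = A.valuation ((q.den : K) * x) := (map_mul _ _ _).symm
    _ ≤ 1 := hdx

/-- Two henselian valuation subrings with residue field `ℚ` are comparable. -/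
private lemma comparable (A B : ValuationSubring K)
    [HenselianLocalRing A] [HenselianLocalRing B]
    (eA : IsLocalRing.ResidueField A ≃+* ℚ) (eB : IsLocalRing.ResidueField B ≃+* ℚ) :
    A ≤ B ∨ B ≤ A := by
  by_contra hcon
  push_neg at hcon
  obtain ⟨hAB, hBA⟩ := hcon
  obtain ⟨u, hu1, hu2⟩ := exists_nonunit_notMem hAB hBA
  have hu0 : u ≠ 0 := by rintro rfl; exact hu2 (zero_mem _)
  have h1u : (1 : K) + u ≠ 0 := by
    intro h
    have : u = -1 := by linear_combination h
    rw [this, Valuation.map_neg, map_one] at hu1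
    exact lt_irrefl _ hu1
  set x : K := (1 - u) / (1 + u) with hxdef
  have hx1 : x - 1 = -(2 * u) / (1 + u) := by
    rw [hxdef]; field_simp; ring_nf
  have hx2 : x + 1 = 2 / (1 + u) := by
    rw [hxdef]
    field_simp
    norm_num
  have hvA1u : A.valuation (1 + u) = 1 := by
    rw [Valuation.map_add_eq_of_lt_left]
    · exact map_one _
    · rw [map_one]; exact hu1
  have hvA2 : A.valuation (2 : K) = 1 := by
    rw [show ((2 : K)) = (((2 : ℤ)) : K) by push_cast; ring]
    exact int_val_one A eA (by norm_num)
  have hvAx : A.valuation (x - 1) < 1 := by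
    rw [hx1, map_div₀, Valuation.map_neg, map_mul, hvA2, hvA1u, one_mul, div_one]
    exact hu1
  have hvBu : (1 : _) < B.valuation u := by
    by_contra h
    exact hu2 (B.mem_of_valuation_le_one u (not_lt.mp h))
  have hvB1u : B.valuation (1 + u) = B.valuation u := by
    rw [Valuation.map_add_eq_of_lt_right]
    rw [map_one]; exact hvBu
  have hvB2 : B.valuation (2 : K) = 1 := by
    rw [show ((2 : K)) = (((2 : ℤ)) : K) by push_cast; ring]
    exact int_val_one B eB (by norm_num)
  have hvBx : B.valuation (-x - 1) < 1 := by
    have : -x - 1 = -(x + 1) := by ring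
    rw [this, Valuation.map_neg, hx2, map_div₀, hvB2, hvB1u]
    rw [show (1 : _) / B.valuation u = (B.valuation u)⁻¹ by rw [one_div]]
    exact (inv_lt_one₀ (zero_lt_one.trans hvBu)).mpr hvBu
  obtain ⟨y, hy⟩ := exists_sq A eA hvAx
  obtain ⟨z, hz⟩ := exists_sq B eB hvBx
  have hxne : x ≠ 0 := by
    rw [hxdef]
    apply div_ne_zero _ h1u
    intro h
    have : u = 1 := by linear_combination -h
    rw [this, map_one] at hu1
    exact lt_irrefl _ hu1
  have hyne : y ≠ 0 := by
    intro h; rw [h] at hy; exact hxne (by simpa using hy.symm)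
  refine no_sqrt_neg_one A eA (z / y) ?_
  rw [div_pow, hy, hz]
  field_simp

end Aux

/-- If a field `K` is henselian with respect to two valuation rings both of whose
residue fields are isomorphic to `ℚ`, then the two valuation rings coincide. -/
theorem henselian_valuationSubrings_eq_of_residue_rat
    (K : Type*) [Field K] (O₁ O₂ : ValuationSubring K)
    [HenselianLocalRing O₁] [HenselianLocalRing O₂]
    (h₁ : Nonempty (IsLocalRing.ResidueField O₁ ≃+* ℚ))
    (h₂ : Nonempty (IsLocalRing.ResidueField O₂ ≃+* ℚ)) :
    O₁ = O₂ := by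
  obtain ⟨e₁⟩ := h₁
  obtain ⟨e₂⟩ := h₂
  rcases comparable O₁ O₂ e₁ e₂ with h | h
  · exact le_antisymm h (le_of_le_rat e₁ e₂ h)
  · exact (le_antisymm h (le_of_le_rat e₂ e₁ h)).symm
end
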